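/- Let S be the topological space on the four-element set {p,q,r,s} (four pairwise distinct points) whose open sets are exactly all subsets of {p,q,r} together with S itself. Then the regular closed subsets of S are exactly ∅, {p,s}, {q,s}, {r,s}, {p,q,s}, {p,r,s}, {q,r,s}, and S, and the nonempty regular closed subsets of S whose interior is a nonempty preconnected subspace are exactly {p,s}, {q,s}, {r,s}, and S. -/

import Mathlib

/-!
The space is `{p, q, r, s}` with the excluded point topology at `s`: a set is open iff it misses
`s` or is everything. So the interior of a proper subset `A` is `A \ {s}`, and the closure of a
nonempty set adds `s`; hence the regular closed sets are `∅`, the whole space, and the sets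
containing `s` together with some other point. Every set containing `s` is preconnected (the only
open set through `s` is the whole space), while a set missing `s` is discrete, so it is
preconnected iff it is a subsingleton.
-/

/-- The four-element set `S = {p, q, r, s}` (four pairwise distinct points). -/
inductive Pt4 : Type
  | p | q | r | s
deriving DecidableEq

open Pt4

open Set

def IsExcludedPointTopology {X : Type*} [TopologicalSpace X] (s : X) : Prop :=
  ∀ U : Set X, IsOpen U ↔ s ∉ U ∨ U = univ

namespace IsExcludedPointTopology

variable {X : Type*} [TopologicalSpace X] {s : X} {A : Set X}

theorem eq_univ_of_isOpen_of_mem (h : IsExcludedPointTopology s) {U : Set X} (hU : IsOpen U)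
    (hs : s ∈ U) : U = univ :=
  ((h U).1 hU).resolve_left (not_not_intro hs)

theorem isOpen_of_notMem (h : IsExcludedPointTopology s) {U : Set X} (hs : s ∉ U) : IsOpen U :=
  (h U).2 (Or.inl hs)

theorem interior_eq_sdiff_singleton (h : IsExcludedPointTopology s) (hA : A ≠ univ) :
    interior A = A \ {s} := by
  refine subset_antisymm (fun x hx => ⟨interior_subset hx, ?_⟩)
    (interior_maximal sdiff_subset (h.isOpen_of_notMem fun hs => hs.2 rfl))
  rintro rfl
  exact hA (eq_univ_of_univ_subset
    (h.eq_univ_of_isOpen_of_mem isOpen_interior hx ▸ interior_subset))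

theorem closure_eq_insert (h : IsExcludedPointTopology s) (hA : A.Nonempty) :
    closure A = insert s A := by
  refine subset_antisymm (closure_minimal (subset_insert s A) ?_) ?_
  · exact isOpen_compl_iff.1 (h.isOpen_of_notMem fun hs => hs (mem_insert s A))
  · refine insert_subset (mem_closure_iff.2 fun U hU hsU => ?_) subset_closure
    rwa [h.eq_univ_of_isOpen_of_mem hU hsU, univ_inter]

theorem eq_closure_interior_iff (h : IsExcludedPointTopology s) :
    A = closure (interior A) ↔ A = ∅ ∨ A = univ ∨ (s ∈ A ∧ (A \ {s}).Nonempty) := by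
  rcases eq_or_ne A univ with rfl | hA
  · simp
  rw [h.interior_eq_sdiff_singleton hA]
  rcases (A \ {s}).eq_empty_or_nonempty with hA' | hA'
  · simp [hA', hA]
  rw [h.closure_eq_insert hA', insert_sdiff_singleton, eq_comm, insert_eq_self]
  simp [hA, hA', hA'.mono sdiff_subset |>.ne_empty]

theorem isPreconnected_of_mem (h : IsExcludedPointTopology s) (hs : s ∈ A) :
    IsPreconnected A := by
  intro U V hU hV hAUV hAU hAV
  rcases hAUV hs with hsU | hsV
  · rwa [h.eq_univ_of_isOpen_of_mem hU hsU, univ_inter]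
  · rwa [h.eq_univ_of_isOpen_of_mem hV hsV, inter_univ]

theorem isPreconnected_iff_subsingleton (h : IsExcludedPointTopology s) (hs : s ∉ A) :
    IsPreconnected A ↔ A.Subsingleton := by
  refine ⟨fun hA x hx y hy => ?_, Subsingleton.isPreconnected⟩
  have hAx : A ⊆ {x} := hA.subset_left_of_subset_union
    (h.isOpen_of_notMem fun hsx => hs (hsx ▸ hx)) (h.isOpen_of_notMem fun hsA => hs hsA.1)
    disjoint_sdiff_right (fun z hz => (em (z = x)).imp id fun hzx => ⟨hz, hzx⟩) ⟨x, hx, rfl⟩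
  exact (hAx hy).symm

theorem regularClosed_interior_nonempty_isPreconnected_iff (h : IsExcludedPointTopology s) :
    (A.Nonempty ∧ A = closure (interior A) ∧ (interior A).Nonempty ∧
      IsPreconnected (interior A)) ↔ A = univ ∨ ∃ x ≠ s, A = {x, s} := by
  rcases eq_or_ne A univ with rfl | hA
  · simpa using ⟨⟨s, trivial⟩, h.isPreconnected_of_mem (mem_univ s)⟩
  rw [h.eq_closure_interior_iff, h.interior_eq_sdiff_singleton hA,
    h.isPreconnected_iff_subsingleton fun hs => hs.2 rfl,
    ← exists_eq_singleton_iff_nonempty_subsingleton]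
  constructor
  · rintro ⟨hA₀, hA₁ | hA₁ | ⟨hs, -⟩, x, hx⟩
    · exact absurd hA₁ hA₀.ne_empty
    · exact absurd hA₁ hA
    have hxs : x ≠ s := (hx.symm ▸ mem_singleton x : x ∈ A \ {s}).2
    refine Or.inr ⟨x, hxs, ?_⟩
    rw [← insert_eq_of_mem hs, ← insert_sdiff_singleton, hx, pair_comm]
  · rintro (hA₁ | ⟨x, hxs, rfl⟩)
    · exact absurd hA₁ hA
    rw [pair_sdiff_right hxs]
    exact ⟨insert_nonempty x {s}, Or.inr (Or.inr ⟨by simp, singleton_nonempty x⟩), x, rfl⟩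

end IsExcludedPointTopology

namespace Pt4

theorem forall_iff {P : Pt4 → Prop} : (∀ x, P x) ↔ P p ∧ P q ∧ P r ∧ P s :=
  ⟨fun h => ⟨h p, h q, h r, h s⟩, fun ⟨hp, hq, hr, hs⟩ x => by cases x <;> assumption⟩

theorem exists_iff {P : Pt4 → Prop} : (∃ x, P x) ↔ P p ∨ P q ∨ P r ∨ P s :=
  ⟨fun ⟨x, hx⟩ => by cases x <;> simp [hx], fun h => by
    rcases h with h | h | h | h <;> exact ⟨_, h⟩⟩

theorem isExcludedPointTopology_of_setOf_isOpen_eq [TopologicalSpace Pt4]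
    (hopen : {U : Set Pt4 | IsOpen U} = {U : Set Pt4 | U ⊆ ({p, q, r} : Set Pt4)} ∪ {univ}) :
    IsExcludedPointTopology s := by
  have hpqr : ({p, q, r} : Set Pt4) = {s}ᶜ := by ext x; cases x <;> simp
  intro U
  simpa [hpqr, subset_compl_singleton_iff, or_comm] using Set.ext_iff.1 hopen U

end Pt4

/-- Let S carry the topology whose open sets are exactly all subsets
of {p,q,r} together with S.  Then the regular closed subsets of S are exactly
∅, {p,s}, {q,s}, {r,s}, {p,q,s}, {p,r,s}, {q,r,s}, and S, and the nonempty regular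
closed subsets of S whose interior is a nonempty preconnected subspace are exactly
{p,s}, {q,s}, {r,s}, and S. -/
theorem stmt17 [TopologicalSpace Pt4]
    (hopen : {U : Set Pt4 | IsOpen U} =
      {U : Set Pt4 | U ⊆ ({p, q, r} : Set Pt4)} ∪ {Set.univ}) :
    {A : Set Pt4 | A = closure (interior A)} =
      ({∅, {p, s}, {q, s}, {r, s}, {p, q, s}, {p, r, s}, {q, r, s},
        Set.univ} : Set (Set Pt4)) ∧
    {A : Set Pt4 | A.Nonempty ∧ A = closure (interior A) ∧
        (interior A).Nonempty ∧ IsPreconnected (interior A)} =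
      ({{p, s}, {q, s}, {r, s}, Set.univ} : Set (Set Pt4)) := by
  have h := Pt4.isExcludedPointTopology_of_setOf_isOpen_eq hopen
  constructor
  · ext A
    rw [mem_ofPred_eq, h.eq_closure_interior_iff]
    by_cases hp : p ∈ A <;> by_cases hq : q ∈ A <;> by_cases hr : r ∈ A <;>
      by_cases hs : s ∈ A <;>
      simp [Set.ext_iff, Set.Nonempty, Pt4.forall_iff, Pt4.exists_iff, hp, hq, hr, hs]
  · ext A
    rw [mem_ofPred_eq, h.regularClosed_interior_nonempty_isPreconnected_iff]
    simp only [Pt4.exists_iff, mem_insert_iff, mem_singleton_iff, ne_eq, reduceCtorEq,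
      not_false_eq_true, true_and, not_true_eq_false, false_and, or_false]
    tauto
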